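/- The CTC marginal probability of the full target equals the final forward variable: α(S, |y|) = ∑_{w : |w|=S, Γ(w)=y} P(w), where α is computed by the CTC forward recursion. -/

import Mathlib

open Finset

/-- The CTC reduction Γ: merge consecutive equal tokens, then remove blanks. -/
def gammaCTC {σ : Type*} [DecidableEq σ] (ε : σ) (w : List σ) : List σ :=
  (w.destutter (· ≠ ·)).filter (· ≠ ε)

/-- The CTC forward recursion with the `ε`/`¬ε` split: `ctcF P ε y s t = (α^ε(s,t), α^¬ε(s,t))`,
where `α(s,t) = α^ε(s,t) + α^¬ε(s,t)`. -/
noncomputable def ctcF {σ : Type*} [DecidableEq σ]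
    (P : ℕ → σ → NNReal) (ε : σ) (y : List σ) : ℕ → ℕ → NNReal × NNReal
  | 0, 0 => (1, 0)
  | 0, _ + 1 => (0, 0)
  | s + 1, 0 => (((ctcF P ε y s 0).1 + (ctcF P ε y s 0).2) * P (s + 1) ε, 0)
  | s + 1, t + 1 =>
      (((ctcF P ε y s (t + 1)).1 + (ctcF P ε y s (t + 1)).2) * P (s + 1) ε,
        (if 0 < t ∧ y.getD t ε = y.getD (t - 1) ε then
            (ctcF P ε y s t).1 + (ctcF P ε y s (t + 1)).2
          else
            (ctcF P ε y s t).1 + (ctcF P ε y s t).2 + (ctcF P ε y s (t + 1)).2) *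
          P (s + 1) (y.getD t ε))

/-!
The two components of `ctcF P ε y s t` are path sums: the total weight of the words of length `s`
whose reduction is the prefix `y.take t` and which end in a blank (the empty word included),
resp. in a label. Appending a letter to a word either leaves its reduction unchanged (a blank, or
a repeat of its last letter) or appends that letter, and a word ending in a label has the same
last letter as its reduction. Sorting the words of length `s + 1` by their last letter therefore
reproduces the forward recursion, and at `t = |y|` the two components add up to the marginal.
-/

namespace List

variable {α : Type*}

theorem destutter'_concat (R : α → α → Prop) [DecidableRel R] (c : α) (l : List α) (a : α) :
    (l ++ [c]).destutter' R a =
      if R ((l.destutter' R a).getLast (destutter'_ne_nil l R)) c then l.destutter' R a ++ [c]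
      else l.destutter' R a := by
  induction l generalizing a with
  | nil => by_cases h : R a c <;> simp [h]
  | cons b l ih =>
    by_cases hab : R a b
    · simp only [cons_append, destutter'_cons_pos _ hab, ih, getLast_cons (destutter'_ne_nil l R)]
      split_ifs <;> rfl
    · simp only [cons_append, destutter'_cons_neg _ hab, ih]

theorem getLast?_destutter'_ne [DecidableEq α] (l : List α) (a : α) :
    (l.destutter' (· ≠ ·) a).getLast? = (a :: l).getLast? := by
  induction l generalizing a with
  | nil => simp
  | cons b l ih =>
    by_cases hab : a = b
    · subst hab
      rw [destutter'_cons_neg _ (by simp), ih, getLast?_cons_cons]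
    · rw [destutter'_cons_pos _ hab, getLast?_cons_cons, getLast?_cons, ih b, getLast?_cons]
      simp

theorem getLast?_destutter_ne [DecidableEq α] (l : List α) :
    (l.destutter (· ≠ ·)).getLast? = l.getLast? := by
  cases l with
  | nil => rfl
  | cons a l => rw [destutter_cons', getLast?_destutter'_ne]

theorem destutter_ne_concat [DecidableEq α] (c : α) (l : List α) :
    (l ++ [c]).destutter (· ≠ ·) =
      if l.getLast? = some c then l.destutter (· ≠ ·) else l.destutter (· ≠ ·) ++ [c] := by
  cases l with
  | nil => simp
  | cons a l =>
    rw [cons_append, destutter_cons', destutter_cons', destutter'_concat,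
      ← getLast?_destutter'_ne, getLast?_eq_some_getLast (destutter'_ne_nil l _)]
    by_cases h : (l.destutter' (· ≠ ·) a).getLast (destutter'_ne_nil l _) = c <;> simp [h]

theorem ofFn_snoc {n : ℕ} (v : Fin n → α) (c : α) :
    ofFn (Fin.snoc v c : Fin (n + 1) → α) = ofFn v ++ [c] := by
  rw [ofFn_succ']
  simp

theorem getLast?_take_eq_some_getD_iff {y : List α} {t : ℕ} (ht : t < y.length)
    (d : α) : (y.take t).getLast? = some (y.getD t d) ↔ 0 < t ∧ y.getD t d = y.getD (t - 1) d := by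
  cases t with
  | zero => simp
  | succ u =>
    rw [getLast?_take, getElem?_eq_getElem (by omega), getD_eq_getElem _ _ ht,
      getD_eq_getElem _ _ (by omega)]
    simp [eq_comm]

end List

section Reduction

variable {σ : Type*}

def EndsInBlank (ε : σ) (l : List σ) : Prop := l.getLast?.getD ε = ε

variable {ε : σ}

@[simp]
theorem endsInBlank_nil : EndsInBlank ε [] := rfl

@[simp]
theorem endsInBlank_concat {l : List σ} {c : σ} : EndsInBlank ε (l ++ [c]) ↔ c = ε := by
  simp [EndsInBlank]

theorem exists_getLast?_of_not_endsInBlank {l : List σ} (hl : ¬EndsInBlank ε l) :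
    ∃ c, l.getLast? = some c ∧ c ≠ ε := by
  cases h : l.getLast? with
  | none => simp [EndsInBlank, h] at hl
  | some c => exact ⟨c, rfl, by simpa [EndsInBlank, h] using hl⟩

variable [DecidableEq σ]

@[simp]
theorem gammaCTC_nil : gammaCTC ε [] = [] := rfl

theorem gammaCTC_concat_blank (l : List σ) : gammaCTC ε (l ++ [ε]) = gammaCTC ε l := by
  unfold gammaCTC
  rw [List.destutter_ne_concat]
  split_ifs <;> simp

theorem gammaCTC_concat_of_ne {c : σ} (hc : c ≠ ε) (l : List σ) :
    gammaCTC ε (l ++ [c]) =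
      if l.getLast? = some c then gammaCTC ε l else gammaCTC ε l ++ [c] := by
  unfold gammaCTC
  rw [List.destutter_ne_concat]
  split_ifs <;> simp [hc]

theorem getLast?_gammaCTC {l : List σ} (hl : ¬EndsInBlank ε l) :
    (gammaCTC ε l).getLast? = l.getLast? := by
  obtain ⟨c, hlc, hc⟩ := exists_getLast?_of_not_endsInBlank hl
  obtain ⟨m, hm⟩ := List.getLast?_eq_some_iff.mp ((List.getLast?_destutter_ne l).trans hlc)
  simp [gammaCTC, hm, hc, hlc]

theorem gammaCTC_ne_nil {l : List σ} (hl : ¬EndsInBlank ε l) : gammaCTC ε l ≠ [] := by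
  obtain ⟨c, hlc, -⟩ := exists_getLast?_of_not_endsInBlank hl
  intro h
  simpa [h, hlc] using getLast?_gammaCTC hl

theorem gammaCTC_concat_eq_concat_iff {b : σ} (hb : b ≠ ε) (l target : List σ) :
    gammaCTC ε (l ++ [b]) = target ++ [b] ↔
      (gammaCTC ε l = target ++ [b] ∧ ¬EndsInBlank ε l) ∨
        (gammaCTC ε l = target ∧ EndsInBlank ε l) ∨
        (gammaCTC ε l = target ∧ ¬EndsInBlank ε l ∧ l.getLast? ≠ some b) := by
  rw [gammaCTC_concat_of_ne hb]
  split_ifs with hlast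
  · have hl : ¬EndsInBlank ε l := by simpa [EndsInBlank, hlast] using hb
    simp [hl, hlast]
  · have hfirst : ¬(gammaCTC ε l = target ++ [b] ∧ ¬EndsInBlank ε l) := fun ⟨hΓ, hl⟩ =>
      hlast (by rw [← getLast?_gammaCTC hl, hΓ, List.getLast?_concat])
    simp only [List.append_cancel_right_eq, hfirst, false_or, ne_eq, hlast, not_false_eq_true,
      and_true]
    tauto

end Reduction

section WordMass

variable {σ : Type*} [Fintype σ] (P : ℕ → σ → NNReal)

open Classical in
noncomputable def wordMass (s : ℕ) (p : List σ → Prop) : NNReal :=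
  ∑ v : Fin s → σ, if p (List.ofFn v) then ∏ i, P (i.1 + 1) (v i) else 0

open Classical in
theorem wordMass_zero (p : List σ → Prop) :
    wordMass P 0 p = if p [] then 1 else 0 := by
  simp [wordMass]

theorem wordMass_succ (s : ℕ) (p : List σ → Prop) :
    wordMass P (s + 1) p = ∑ c, wordMass P s (fun l => p (l ++ [c])) * P (s + 1) c := by
  simp only [wordMass, Finset.sum_mul]
  rw [← (Fin.snocEquiv fun _ => σ).sum_comp, Fintype.sum_prod_type]
  refine Finset.sum_congr rfl fun c _ => Finset.sum_congr rfl fun v _ => ?_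
  rw [ite_mul, zero_mul]
  congr 1
  · exact congrArg p (List.ofFn_snoc v c)
  · simp [Fin.prod_univ_castSucc]

theorem wordMass_eq_zero {s : ℕ} {p : List σ → Prop} (hp : ∀ l, ¬p l) : wordMass P s p = 0 := by
  simp [wordMass, hp]

theorem wordMass_congr {s : ℕ} {p q : List σ → Prop} (h : ∀ l, p l ↔ q l) :
    wordMass P s p = wordMass P s q := by
  simp only [funext fun l => propext (h l)]

theorem wordMass_or {s : ℕ} {p q : List σ → Prop} (h : ∀ l, ¬(p l ∧ q l)) :
    wordMass P s (fun l => p l ∨ q l) = wordMass P s p + wordMass P s q := by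
  simp only [wordMass, ← Finset.sum_add_distrib]
  refine Finset.sum_congr rfl fun v _ => ?_
  have := h (List.ofFn v)
  split_ifs <;> simp_all

theorem wordMass_and_add_and_not (s : ℕ) (p q : List σ → Prop) :
    wordMass P s (fun l => p l ∧ q l) + wordMass P s (fun l => p l ∧ ¬q l) = wordMass P s p := by
  rw [← wordMass_or P fun l h => h.2.2 h.1.2]
  exact wordMass_congr P fun l => by tauto

end WordMass

section Forward

variable {σ : Type*} [Fintype σ] [DecidableEq σ] (P : ℕ → σ → NNReal) {ε : σ}

theorem wordMass_succ_endsInBlank (s : ℕ) (target : List σ) :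
    wordMass P (s + 1) (fun l => gammaCTC ε l = target ∧ EndsInBlank ε l) =
      (wordMass P s (fun l => gammaCTC ε l = target ∧ EndsInBlank ε l) +
        wordMass P s (fun l => gammaCTC ε l = target ∧ ¬EndsInBlank ε l)) * P (s + 1) ε := by
  rw [wordMass_succ, Finset.sum_eq_single ε, wordMass_and_add_and_not]
  · congr 1
    exact wordMass_congr P fun l => by simp [gammaCTC_concat_blank]
  · intro c _ hc
    rw [wordMass_eq_zero P fun l h => hc (endsInBlank_concat.mp h.2), zero_mul]
  · simp

theorem wordMass_succ_not_endsInBlank (s : ℕ) (target : List σ) {b : σ} (hb : b ≠ ε) :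
    wordMass P (s + 1) (fun l => gammaCTC ε l = target ++ [b] ∧ ¬EndsInBlank ε l) =
      (wordMass P s (fun l => gammaCTC ε l = target ++ [b] ∧ ¬EndsInBlank ε l) +
        wordMass P s (fun l => gammaCTC ε l = target ∧ EndsInBlank ε l) +
        wordMass P s (fun l => gammaCTC ε l = target ∧ ¬EndsInBlank ε l ∧ l.getLast? ≠ some b)) *
        P (s + 1) b := by
  rw [wordMass_succ, Finset.sum_eq_single b, ← wordMass_or, ← wordMass_or]
  · congr 1
    exact wordMass_congr P fun l => by simp [hb, gammaCTC_concat_eq_concat_iff hb, or_assoc]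
  · rintro l ⟨⟨hΓ, -⟩ | ⟨-, hl⟩, hΓ', hl', -⟩
    · simp [hΓ'] at hΓ
    · exact hl' hl
  · exact fun l ⟨⟨_, hl⟩, _, hl'⟩ => hl hl'
  · intro c _ hcb
    refine (mul_eq_zero_of_left (wordMass_eq_zero P fun l ⟨hΓ, hl⟩ => hcb ?_) _)
    simpa [hΓ, eq_comm] using getLast?_gammaCTC hl
  · simp

theorem wordMass_not_endsInBlank_getLast?_ne (s : ℕ) (target : List σ) (b : σ) :
    wordMass P s (fun l => gammaCTC ε l = target ∧ ¬EndsInBlank ε l ∧ l.getLast? ≠ some b) =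
      if target.getLast? = some b then 0
      else wordMass P s (fun l => gammaCTC ε l = target ∧ ¬EndsInBlank ε l) := by
  split_ifs with htarget
  · refine wordMass_eq_zero P fun l ⟨hΓ, hl, hlast⟩ => hlast ?_
    rw [← getLast?_gammaCTC hl, hΓ, htarget]
  · refine wordMass_congr P fun l => ⟨fun ⟨hΓ, hl, _⟩ => ⟨hΓ, hl⟩, fun ⟨hΓ, hl⟩ => ⟨hΓ, hl, ?_⟩⟩
    rwa [← getLast?_gammaCTC hl, hΓ]

theorem ctcF_eq_wordMass (y : List σ) (hy : ε ∉ y) (s : ℕ) {t : ℕ} (ht : t ≤ y.length) :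
    ctcF P ε y s t =
      (wordMass P s (fun l => gammaCTC ε l = y.take t ∧ EndsInBlank ε l),
        wordMass P s (fun l => gammaCTC ε l = y.take t ∧ ¬EndsInBlank ε l)) := by
  induction s generalizing t with
  | zero =>
    cases t with
    | zero => simp [ctcF, wordMass_zero]
    | succ t =>
      have : y.take (t + 1) ≠ [] := List.ne_nil_of_length_pos (by simp; omega)
      simp [ctcF, wordMass_zero, this.symm]
  | succ s ih =>
    cases t with
    | zero =>
      rw [ctcF, ih (Nat.zero_le _)]
      congr 1
      · exact (wordMass_succ_endsInBlank P s _).symm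
      · exact (wordMass_eq_zero P fun l ⟨hΓ, hl⟩ => gammaCTC_ne_nil hl (by simpa using hΓ)).symm
    | succ t =>
      have htl : t < y.length := ht
      have hb : y.getD t ε ≠ ε := by
        rw [List.getD_eq_getElem _ _ htl]
        exact fun h => hy (h ▸ List.getElem_mem htl)
      have htake : y.take (t + 1) = y.take t ++ [y.getD t ε] := by
        rw [List.take_add_one, List.getElem?_eq_getElem htl, List.getD_eq_getElem _ _ htl]
        rfl
      rw [ctcF, ih ht, ih htl.le]
      congr 1
      · exact (wordMass_succ_endsInBlank P s _).symm
      · rw [htake, wordMass_succ_not_endsInBlank P s _ hb, wordMass_not_endsInBlank_getLast?_ne]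
        simp only [List.getLast?_take_eq_some_getD_iff htl]
        split_ifs <;> ring

end Forward

/-- The CTC marginal probability of the full target equals the final forward
variable: `α(S,|y|) = ∑_{w : |w|=S, Γ(w)=y} P(w)`, where `α` is computed by the CTC forward
recursion and `P(w)` is the product of the per-slot probabilities. -/
theorem ctc_forward_eq_marginal {σ : Type*} [Fintype σ] [DecidableEq σ]
    (P : ℕ → σ → NNReal) (ε : σ) (y : List σ) (hy : ε ∉ y) (S : ℕ) :
    (ctcF P ε y S y.length).1 + (ctcF P ε y S y.length).2 =
      ∑ w : Fin S → σ,
        if gammaCTC ε (List.ofFn w) = y then ∏ i, P (i.1 + 1) (w i) else 0 := by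
  rw [ctcF_eq_wordMass P y hy S le_rfl, List.take_length, wordMass_and_add_and_not, wordMass]
  congr 1
  ext w
  congr
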